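/- arXiv:1809.00268 — 4 statements merged into one kernel-verified Lean document; each statement's English description precedes it below -/
import Mathlib

section
/- The matching point estimate for the pairwise average treatment effect on the treated admits the closed form: (1/n_t) Σ_{i: W_i = t} (Ŷ_i(j) − Ŷ_i(k)) = (1/n_t) Σ_{i=1}^{n} (T_{ij} − T_{ik}) (T_{it} + ψ_{it}/m) Y_i^{obs}, where ψ_{iw} counts how many units in treatment group w use unit i as one of their m matches. -/
open Finset

/-- Closed form of the matching point estimate of the pairwise ATT.
Units `i : Fin n` with treatments `W i : Fin Z`; `T i w` the real indicator of `W i = w`;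
`M i w` is the set of `m` matches of unit `i` from group `w` (subset of group `w`,
cardinality `m` whenever `W i ≠ w`, and `M i (W i) = ∅`); `ψ i w` counts how many units
`j` in group `w` use `i` as a match (`i ∈ M j (W i)`); `Yhat i w` is `Yobs i` when
`T i w = 1` and otherwise the average of observed outcomes over `M i w`.  Then
`(1/n_t) ∑_{W i = t} (Yhat i j − Yhat i k)
  = (1/n_t) ∑_i (T i j − T i k) (T i t + ψ i t / m) * Yobs i`. -/
theorem matching_att_closed_form {n Z : ℕ} (m : ℕ) (hm : 0 < m)
    (W : Fin n → Fin Z) (Yobs : Fin n → ℝ)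
    (T : Fin n → Fin Z → ℝ) (hT : ∀ i w, T i w = if W i = w then 1 else 0)
    (M : Fin n → Fin Z → Finset (Fin n))
    (hMsub : ∀ i w, ∀ l ∈ M i w, W l = w)
    (hMcard : ∀ i w, W i ≠ w → (M i w).card = m)
    (hMself : ∀ i, M i (W i) = ∅)
    (ψ : Fin n → Fin Z → ℝ)
    (hψ : ∀ i w, ψ i w =
      ∑ l ∈ univ.filter (fun l => W l = w), (if i ∈ M l (W i) then (1 : ℝ) else 0))
    (Yhat : Fin n → Fin Z → ℝ)
    (hYhat : ∀ i w, Yhat i w =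
      if W i = w then Yobs i else (1 / (m : ℝ)) * ∑ l ∈ M i w, Yobs l)
    (j k t : Fin Z) (hjk : j ≠ k)
    (nt : ℝ) (hnt : nt = (univ.filter (fun i => W i = t)).card) :
    (1 / nt) * ∑ i ∈ univ.filter (fun i => W i = t), (Yhat i j - Yhat i k)
      = (1 / nt) * ∑ i : Fin n,
          (T i j - T i k) * (T i t + ψ i t / (m : ℝ)) * Yobs i := by
  have key : ∀ w : Fin Z,
      ∑ i ∈ univ.filter (fun i => W i = t), Yhat i w
        = ∑ i : Fin n, T i w * (T i t + ψ i t / (m : ℝ)) * Yobs i := by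
    intro w
    have h1 : ∀ l ∈ univ.filter (fun i => W i = t),
        Yhat l w = (if W l = w then Yobs l else 0)
          + (1 / (m : ℝ)) * ∑ i ∈ M l w, Yobs i := by
      intro l _
      rw [hYhat]
      by_cases h : W l = w
      · have hempty : M l w = ∅ := by rw [← h]; exact hMself l
        simp [h, hempty]
      · simp [h]
    rw [Finset.sum_congr rfl h1, Finset.sum_add_distrib]
    have h2 : ∀ i : Fin n, T i w * (T i t + ψ i t / (m : ℝ)) * Yobs i
        = T i w * T i t * Yobs i + (1 / (m : ℝ)) * (T i w * ψ i t * Yobs i) := by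
      intro i
      have hm' : (m : ℝ) ≠ 0 := Nat.cast_ne_zero.mpr hm.ne'
      field_simp
    rw [Finset.sum_congr rfl (fun i _ => h2 i), Finset.sum_add_distrib]
    congr 1
    · rw [Finset.sum_filter]
      apply Finset.sum_congr rfl
      intro i _
      rw [hT, hT]
      by_cases h1 : W i = t <;> by_cases h2 : W i = w <;> simp [h1, h2]
    · rw [← Finset.mul_sum, ← Finset.mul_sum]
      congr 1
      have hswap : ∀ i : Fin n, T i w * ψ i t * Yobs i
          = ∑ l ∈ univ.filter (fun l => W l = t),
              (T i w * (if i ∈ M l (W i) then (1 : ℝ) else 0) * Yobs i) := by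
        intro i
        rw [hψ, Finset.mul_sum, Finset.sum_mul]
      rw [Finset.sum_congr rfl (fun i _ => hswap i), Finset.sum_comm]
      apply Finset.sum_congr rfl
      intro l _
      have : ∀ i : Fin n, T i w * (if i ∈ M l (W i) then (1 : ℝ) else 0) * Yobs i
          = if i ∈ M l w then Yobs i else 0 := by
        intro i
        rw [hT]
        by_cases h : W i = w
        · subst h; by_cases h2 : i ∈ M l (W i) <;> simp [h2]
        · have : i ∉ M l w := fun hmem => h (hMsub l w i hmem)
          simp [h, this]
      rw [Finset.sum_congr rfl (fun i _ => this i)]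
      rw [Finset.sum_ite_mem]
      simp
  rw [Finset.sum_sub_distrib, key j, key k, ← Finset.sum_sub_distrib]
  congr 1
  apply Finset.sum_congr rfl
  intro i _
  ring
end

section
/- The matched-sample average of imputed potential outcomes satisfies Ỹ^t(w) := (1/n_t) Σ_{i: W_i = t} Ŷ_i(w) = (1/n_t) Σ_{i=1}^{n} T_{iw} (T_{it} + ψ_{it}/m) Y_i^{obs}. -/
/-!
Since a unit is never matched within its own group, `Ŷ_i(w) = T_{iw} Y_i + (1/m) ∑_{l ∈ M_i^w} Y_l`
holds for every unit `i`, treated or not. Summing over group `t` and exchanging the order of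
summation (unit `l` of group `w` occurs in exactly `ψ_{lt}` of the sets `M_i^w`, `W_i = t`)
turns the matched part into `(1/m) ∑_{W_l = w} ψ_{lt} Y_l`.
-/

open Finset

theorem Finset.sum_sum_mem_eq_sum_count_mul {ι κ R : Type*} [DecidableEq κ] [NonAssocSemiring R]
    {s : Finset ι} {u : Finset κ} (M : ι → Finset κ) (hM : ∀ i ∈ s, M i ⊆ u) (f : κ → R) :
    ∑ i ∈ s, ∑ l ∈ M i, f l = ∑ l ∈ u, (∑ i ∈ s, if l ∈ M i then (1 : R) else 0) * f l := by
  rw [sum_comm' (s' := fun l => s.filter (l ∈ M ·)) (t' := u)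
    (fun i l => ⟨fun h => ⟨mem_filter.2 h, hM _ h.1 h.2⟩, fun h => mem_filter.1 h.1⟩)]
  simp only [sum_const, sum_boole, nsmul_eq_mul]

theorem Finset.sum_filter_eq_sum_indicator_mul {ι α R : Type*} [Fintype ι] [NonAssocSemiring R]
    [DecidableEq α] (W : ι → α) (T : ι → α → R) (hT : ∀ i a, T i a = if W i = a then 1 else 0)
    (a : α) (f : ι → R) :
    ∑ i ∈ univ.filter (fun i => W i = a), f i = ∑ i, T i a * f i := by
  simp only [hT, boole_mul, sum_filter]

theorem matched_average_closed_form_general {n Z : ℕ} (m : ℕ)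
    (W : Fin n → Fin Z) (Yobs : Fin n → ℝ)
    (T : Fin n → Fin Z → ℝ) (hT : ∀ i w, T i w = if W i = w then 1 else 0)
    (M : Fin n → Fin Z → Finset (Fin n))
    (hMsub : ∀ i w, ∀ l ∈ M i w, W l = w)
    (hMself : ∀ i, M i (W i) = ∅)
    (ψ : Fin n → Fin Z → ℝ)
    (hψ : ∀ i w, ψ i w =
      ∑ l ∈ univ.filter (fun l => W l = w), (if i ∈ M l (W i) then (1 : ℝ) else 0))
    (Yhat : Fin n → Fin Z → ℝ)
    (hYhat : ∀ i w, Yhat i w =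
      if W i = w then Yobs i else (1 / (m : ℝ)) * ∑ l ∈ M i w, Yobs l)
    (w t : Fin Z)
    (nt : ℝ) :
    (1 / nt) * ∑ i ∈ univ.filter (fun i => W i = t), Yhat i w
      = (1 / nt) * ∑ i : Fin n, T i w * (T i t + ψ i t / (m : ℝ)) * Yobs i := by
  have hYhat' : ∀ i, Yhat i w = T i w * Yobs i + ∑ l ∈ M i w, Yobs l / m := by
    intro i
    rw [hYhat, hT, ← sum_div]
    split_ifs with h
    · simp [← h, hMself]
    · ring
  have hψ' : ∀ l, W l = w → ψ l t = ∑ i ∈ univ.filter (fun i => W i = t),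
      if l ∈ M i w then (1 : ℝ) else 0 := by
    intro l hl
    rw [hψ, hl]
  congr 1
  calc ∑ i ∈ univ.filter (fun i => W i = t), Yhat i w
      = ∑ i ∈ univ.filter (fun i => W i = t), T i w * Yobs i
        + ∑ i ∈ univ.filter (fun i => W i = t), ∑ l ∈ M i w, Yobs l / m := by
        simp only [hYhat', sum_add_distrib]
    _ = ∑ i, T i t * (T i w * Yobs i)
        + ∑ l ∈ univ.filter (fun l => W l = w), ψ l t * (Yobs l / m) := by
        rw [sum_filter_eq_sum_indicator_mul W T hT,
          sum_sum_mem_eq_sum_count_mul (u := univ.filter (fun l => W l = w))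
            (fun i => M i w) (fun i _ l hl => mem_filter.2 ⟨mem_univ l, hMsub i w l hl⟩)]
        congr 1
        exact sum_congr rfl fun l hl => by rw [hψ' l (mem_filter.1 hl).2]
    _ = ∑ i, T i w * (T i t + ψ i t / m) * Yobs i := by
        rw [sum_filter_eq_sum_indicator_mul W T hT, ← sum_add_distrib]
        exact sum_congr rfl fun i _ => by ring

/-- The matched-sample average of imputed potential outcomes satisfies
`Ỹ^t(w) := (1/n_t) ∑_{W i = t} Yhat i w = (1/n_t) ∑_i T i w (T i t + ψ i t / m) Yobs i`. -/
theorem matched_average_closed_form {n Z : ℕ} (m : ℕ) (hm : 0 < m)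
    (W : Fin n → Fin Z) (Yobs : Fin n → ℝ)
    (T : Fin n → Fin Z → ℝ) (hT : ∀ i w, T i w = if W i = w then 1 else 0)
    (M : Fin n → Fin Z → Finset (Fin n))
    (hMsub : ∀ i w, ∀ l ∈ M i w, W l = w)
    (hMcard : ∀ i w, W i ≠ w → (M i w).card = m)
    (hMself : ∀ i, M i (W i) = ∅)
    (ψ : Fin n → Fin Z → ℝ)
    (hψ : ∀ i w, ψ i w =
      ∑ l ∈ univ.filter (fun l => W l = w), (if i ∈ M l (W i) then (1 : ℝ) else 0))
    (Yhat : Fin n → Fin Z → ℝ)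
    (hYhat : ∀ i w, Yhat i w =
      if W i = w then Yobs i else (1 / (m : ℝ)) * ∑ l ∈ M i w, Yobs l)
    (w t : Fin Z)
    (nt : ℝ) (hnt : nt = (univ.filter (fun i => W i = t)).card) :
    (1 / nt) * ∑ i ∈ univ.filter (fun i => W i = t), Yhat i w
      = (1 / nt) * ∑ i : Fin n, T i w * (T i t + ψ i t / (m : ℝ)) * Yobs i :=
  matched_average_closed_form_general m W Yobs T hT M hMsub hMself ψ hψ Yhat hYhat w t nt
end

section
/- If, conditional on treatment assignment, observations in distinct treatment groups are independent, then the matched averages Ỹ^t(w) and Ỹ^t(w') are independent random variables for any two distinct treatments w ≠ w', where the matching of units and the counts ψ_{it} are measurable functions of the covariates and treatment assignments only. -/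
open Finset MeasureTheory ProbabilityTheory

/-!
Each matched average is a linear combination of the outcomes whose coefficients vanish outside
its own treatment group. Such a combination is a function of the subfamily of outcomes indexed
by the support of its coefficients, and disjoint subfamilies of an independent family are
independent.
-/

namespace ProbabilityTheory

variable {Ω ι : Type*} [Fintype ι]

lemma sum_mul_eq_comp_subtype_support (a : ι → ℝ) (Y : ι → Ω → ℝ) :
    (fun ω => ∑ i, a i * Y i ω) =
      (fun x : {i // i ∈ univ.filter (a · ≠ 0)} → ℝ => ∑ i, a i.1 * x i) ∘
        fun ω i => Y i ω := by
  funext ω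
  rw [Function.comp_apply, Finset.sum_coe_sort _ fun i => a i * Y i ω,
    Finset.sum_filter_of_ne fun i _ h => left_ne_zero_of_mul h]

variable [MeasurableSpace Ω] {μ : Measure Ω} {Y : ι → Ω → ℝ}

theorem iIndepFun.indepFun_sum_mul_of_disjoint_support (hY : iIndepFun Y μ)
    (hmeas : ∀ i, Measurable (Y i)) {a b : ι → ℝ}
    (hab : Disjoint (Function.support a) (Function.support b)) :
    IndepFun (fun ω => ∑ i, a i * Y i ω) (fun ω => ∑ i, b i * Y i ω) μ := by
  have hdisj : Disjoint (univ.filter (a · ≠ 0)) (univ.filter (b · ≠ 0)) := by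
    rw [Finset.disjoint_filter]
    exact fun i _ ha hb => Set.disjoint_left.mp hab ha hb
  rw [sum_mul_eq_comp_subtype_support a, sum_mul_eq_comp_subtype_support b]
  exact (hY.indepFun_finset _ _ hdisj hmeas).comp
    (Finset.measurable_sum _ fun i _ => (measurable_pi_apply i).const_mul _)
    (Finset.measurable_sum _ fun i _ => (measurable_pi_apply i).const_mul _)

end ProbabilityTheory

theorem matched_averages_independent_general {Ω : Type*} [MeasurableSpace Ω]
    (μ : Measure Ω) {n Z : ℕ}
    (W : Fin n → Fin Z) (Y : Fin n → Ω → ℝ)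
    (hmeas : ∀ i, Measurable (Y i))
    (hindep : iIndepFun Y μ)
    (m : ℕ) (T : Fin n → Fin Z → ℝ)
    (hT : ∀ i v, T i v = if W i = v then 1 else 0)
    (ψ : Fin n → Fin Z → ℝ) (nt : ℝ)
    (t w w' : Fin Z) (hww' : w ≠ w') :
    IndepFun
      (fun ω => (1 / nt) * ∑ i : Fin n, T i w * (T i t + ψ i t / (m : ℝ)) * Y i ω)
      (fun ω => (1 / nt) * ∑ i : Fin n, T i w' * (T i t + ψ i t / (m : ℝ)) * Y i ω)
      μ := by
  have hgroup : ∀ i v, T i v ≠ 0 → W i = v := fun i v h => by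
    by_contra hne
    simp [hT, hne] at h
  have hsupp : Disjoint (Function.support fun i => T i w * (T i t + ψ i t / (m : ℝ)))
      (Function.support fun i => T i w' * (T i t + ψ i t / (m : ℝ))) :=
    Set.disjoint_left.mpr fun i hw hw' =>
      hww' ((hgroup i w (left_ne_zero_of_mul hw)).symm.trans
        (hgroup i w' (left_ne_zero_of_mul hw')))
  exact (hindep.indepFun_sum_mul_of_disjoint_support hmeas hsupp).comp
    (measurable_const_mul (1 / nt)) (measurable_const_mul (1 / nt))

/-- Lemma 1: If, conditional on the (deterministic, given `(X,W)`)
treatment assignment, the outcomes of distinct units are independent, then the matched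
averages `Ỹ^t(w) = (1/n_t) ∑_i T i w (T i t + ψ i t / m) Yobs i` and `Ỹ^t(w')` are
independent for `w ≠ w'`, since each is a deterministic weighted sum over outcomes from
its own treatment group, and the weights (hence matches and counts `ψ i t`) are
functions of the covariates and treatment assignments only. -/
theorem matched_averages_independent {Ω : Type*} [MeasurableSpace Ω]
    (μ : Measure Ω) [IsProbabilityMeasure μ] {n Z : ℕ}
    (W : Fin n → Fin Z) (Y : Fin n → Ω → ℝ)
    (hmeas : ∀ i, Measurable (Y i))
    (hindep : iIndepFun Y μ)
    (m : ℕ) (hm : 0 < m) (T : Fin n → Fin Z → ℝ)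
    (hT : ∀ i v, T i v = if W i = v then 1 else 0)
    (ψ : Fin n → Fin Z → ℝ) (nt : ℝ)
    (t w w' : Fin Z) (hww' : w ≠ w') :
    IndepFun
      (fun ω => (1 / nt) * ∑ i : Fin n, T i w * (T i t + ψ i t / (m : ℝ)) * Y i ω)
      (fun ω => (1 / nt) * ∑ i : Fin n, T i w' * (T i t + ψ i t / (m : ℝ)) * Y i ω)
      μ :=
  matched_averages_independent_general μ W Y hmeas hindep m T hT ψ nt t w w' hww'
end

section
/- If Y_i and Y_{ℓ_1(i)},...,Y_{ℓ_J(i)} are independent random variables all with mean μ_w(X_i) and variance σ_w²(X_i) (i.e., all J matches have the same covariate value as unit i), then σ̂_w²(X_i) := (J/(J+1)) · (Y_i − (1/J) Σ_{j=1}^{J} Y_{ℓ_j(i)})² is an unbiased estimator of σ_w²(X_i): E[σ̂_w²(X_i)] = σ_w²(X_i). -/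
/-!
The deviation `Y 0 - (1/J) ∑ Y j.succ` is the linear combination `∑ c j * Y j` with
`c = (1, -1/J, …, -1/J)`. The coefficients sum to `0`, so the deviation is centred and its second
moment is its variance, which by independence is `∑ c j ^ 2 * σ2 = (1 + 1/J) * σ2`.
-/

open MeasureTheory ProbabilityTheory Finset

namespace ProbabilityTheory

variable {ι Ω : Type*} [Fintype ι] [MeasurableSpace Ω] {μ : Measure Ω} {Y : ι → Ω → ℝ}

lemma iIndepFun.variance_sum_const_mul (hL2 : ∀ i, MemLp (Y i) 2 μ) (hindep : iIndepFun Y μ)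
    (c : ι → ℝ) :
    variance (fun ω ↦ ∑ i, c i * Y i ω) μ = ∑ i, c i ^ 2 * variance (Y i) μ := by
  have hsum := IndepFun.variance_sum (s := univ) (X := fun i ω ↦ c i * Y i ω)
    (fun i _ ↦ (hL2 i).const_mul (c i))
    (fun i _ j _ hij ↦ (hindep.indepFun hij).comp (measurable_const_mul (c i))
      (measurable_const_mul (c j)))
  simp only [sum_fn, variance_const_mul] at hsum
  exact hsum

lemma iIndepFun.integral_sum_const_mul_sq_of_sum_eq_zero [IsFiniteMeasure μ] (hL2 : ∀ i, MemLp (Y i) 2 μ)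
    (hindep : iIndepFun Y μ) {m : ℝ} (hmean : ∀ i, ∫ ω, Y i ω ∂μ = m) {c : ι → ℝ}
    (hc : ∑ i, c i = 0) :
    ∫ ω, (∑ i, c i * Y i ω) ^ 2 ∂μ = ∑ i, c i ^ 2 * variance (Y i) μ := by
  have hint : ∫ ω, ∑ i, c i * Y i ω ∂μ = 0 := by
    rw [integral_finsetSum _ fun i _ ↦ ((hL2 i).integrable one_le_two).const_mul (c i)]
    simp only [integral_const_mul, hmean, ← sum_mul, hc, zero_mul]
  have haem : AEMeasurable (fun ω ↦ ∑ i, c i * Y i ω) μ :=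
    aemeasurable_fun_sum _ fun i _ ↦ ((hL2 i).aemeasurable).const_mul (c i)
  rw [← variance_of_integral_eq_zero haem hint, hindep.variance_sum_const_mul hL2]

end ProbabilityTheory

theorem matched_variance_estimator_unbiased_general {Ω : Type*} [MeasurableSpace Ω]
    (μ : Measure Ω) [IsProbabilityMeasure μ] (J : ℕ) (hJ : 0 < J)
    (Y : Fin (J + 1) → Ω → ℝ)
    (hL2 : ∀ j, MemLp (Y j) 2 μ)
    (hindep : iIndepFun Y μ)
    (μw σ2 : ℝ)
    (hmean : ∀ j, ∫ ω, Y j ω ∂μ = μw)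
    (hvar : ∀ j, variance (Y j) μ = σ2) :
    ∫ ω, ((J : ℝ) / (J + 1))
        * (Y 0 ω - (1 / (J : ℝ)) * ∑ j : Fin J, Y j.succ ω) ^ 2 ∂μ
      = σ2 := by
  have hJ0 : (J : ℝ) ≠ 0 := Nat.cast_ne_zero.mpr hJ.ne'
  let c : Fin (J + 1) → ℝ := Fin.cons 1 fun _ ↦ -(1 / (J : ℝ))
  have hdev : ∀ ω, Y 0 ω - 1 / (J : ℝ) * ∑ j : Fin J, Y j.succ ω = ∑ j, c j * Y j ω := by
    intro ω
    simp only [c, Fin.sum_univ_succ, Fin.cons_zero, Fin.cons_succ, mul_sum, neg_mul, one_mul,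
      sum_neg_distrib, sub_eq_add_neg]
  have hc : ∑ j, c j = 0 := by
    simp only [c, Fin.sum_univ_succ, Fin.cons_zero, Fin.cons_succ, sum_const, card_univ,
      Fintype.card_fin, nsmul_eq_mul]
    field_simp
    ring
  have hc2 : ∑ j, c j ^ 2 = ((J : ℝ) + 1) / J := by
    simp only [c, Fin.sum_univ_succ, Fin.cons_zero, Fin.cons_succ, sum_const, card_univ,
      Fintype.card_fin, nsmul_eq_mul]
    field_simp
  simp_rw [hdev]
  rw [integral_const_mul, hindep.integral_sum_const_mul_sq_of_sum_eq_zero hL2 hmean hc]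
  simp only [hvar, ← sum_mul, hc2]
  field_simp

/-- If `Y 0` (unit `i`'s outcome) and its `J` within-group matches
`Y 1, …, Y J` are independent random variables with common mean `μw` and common
variance `σ2` (all matches share unit `i`'s covariate value), then
`σ̂² := (J/(J+1)) (Y 0 − (1/J) ∑_{j=1}^J Y j)²` is unbiased: `E[σ̂²] = σ2`. -/
theorem matched_variance_estimator_unbiased {Ω : Type*} [MeasurableSpace Ω]
    (μ : Measure Ω) [IsProbabilityMeasure μ] (J : ℕ) (hJ : 0 < J)
    (Y : Fin (J + 1) → Ω → ℝ)
    (hmeas : ∀ j, Measurable (Y j)) (hL2 : ∀ j, MemLp (Y j) 2 μ)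
    (hindep : iIndepFun Y μ)
    (μw σ2 : ℝ)
    (hmean : ∀ j, ∫ ω, Y j ω ∂μ = μw)
    (hvar : ∀ j, variance (Y j) μ = σ2) :
    ∫ ω, ((J : ℝ) / (J + 1))
        * (Y 0 ω - (1 / (J : ℝ)) * ∑ j : Fin J, Y j.succ ω) ^ 2 ∂μ
      = σ2 :=
  matched_variance_estimator_unbiased_general μ J hJ Y hL2 hindep μw σ2 hmean hvar
end
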